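/- arXiv:1709.00409 — 2 statements merged into one kernel-verified Lean document; each statement's English description precedes it below -/
import Mathlib

section
/- The second characteristic field is genuinely nonlinear on Ω = {h > 0, 0 ≤ n < h} when C > 1/2: for the eigenvector r₂ = (h² − sqrt(h³n/(2C)), sqrt(n³h/(2C))) corresponding to λ₂(h,n) = h², the directional derivative ∇λ₂ · r₂ = 2h(h² − sqrt(h³n/(2C))) is nonzero. -/
/-- The second characteristic field is genuinely nonlinear on Ω when C > 1/2:
∇λ₂ · r₂ = 2h(h² − √(h³n/(2C))) is nonzero. -/
theorem second_field_genuinely_nonlinear (C h n : ℝ) (hC : 1 / 2 < C)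
    (hh : 0 < h) (hn0 : 0 ≤ n) (hnh : n < h) :
    2 * h * (h ^ 2 - Real.sqrt (h ^ 3 * n / (2 * C))) ≠ 0 := by
  have hC0 : 0 < 2 * C := by linarith
  have hlt : h ^ 3 * n / (2 * C) < (h ^ 2) ^ 2 := by
    have h1 : h ^ 3 * n < h ^ 3 * h := by
      have : 0 < h ^ 3 := by positivity
      nlinarith
    have h2 : h ^ 3 * n / (2 * C) ≤ h ^ 3 * n :=
      div_le_self (by positivity) (by linarith)
    nlinarith [pow_pos hh 3]
  have hs : Real.sqrt (h ^ 3 * n / (2 * C)) < h ^ 2 := by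
    have := Real.sqrt_lt_sqrt (by positivity) hlt
    rwa [Real.sqrt_sq (by positivity)] at this
  have : 0 < h ^ 2 - Real.sqrt (h ^ 3 * n / (2 * C)) := by linarith
  positivity
end

section
/- Given the two Rankine–Hugoniot relations with h ≠ h_p and n ≠ n_p, the shock speed s satisfies s² = sqrt(2/(81C)) · (h² + h h_p + h_p²)·((nh)^{3/2} − (n_p h_p)^{3/2})/(n − n_p), provided the right-hand side is nonnegative. -/
/-- Given the two Rankine–Hugoniot relations, the shock speed satisfies
s² = √(2/(81C)) (h² + h h_p + h_p²)((nh)^(3/2) − (n_p h_p)^(3/2))/(n − n_p),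
provided the right-hand side is nonnegative. -/
theorem shock_speed_squared (C s h n hp np : ℝ) (hC : 0 < C)
    (hh : 0 ≤ h) (hn : 0 ≤ n) (hhp : 0 ≤ hp) (hnp : 0 ≤ np)
    (hhe : h ≠ hp) (hne : n ≠ np)
    (rh1 : s * (h - hp) = 1 / 3 * (h ^ 3 - hp ^ 3))
    (rh2 : s * (n - np) =
      Real.sqrt (2 / (9 * C)) * ((n * h) ^ ((3 : ℝ) / 2) - (np * hp) ^ ((3 : ℝ) / 2)))
    (hnonneg : 0 ≤ Real.sqrt (2 / (81 * C)) * ((h ^ 2 + h * hp + hp ^ 2) *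
      ((n * h) ^ ((3 : ℝ) / 2) - (np * hp) ^ ((3 : ℝ) / 2)) / (n - np))) :
    s ^ 2 = Real.sqrt (2 / (81 * C)) * ((h ^ 2 + h * hp + hp ^ 2) *
      ((n * h) ^ ((3 : ℝ) / 2) - (np * hp) ^ ((3 : ℝ) / 2)) / (n - np)) := by
  have hhe' : h - hp ≠ 0 := sub_ne_zero.mpr hhe
  have hne' : n - np ≠ 0 := sub_ne_zero.mpr hne
  have e1 : s = (h ^ 2 + h * hp + hp ^ 2) / 3 := by
    have : (s - (h ^ 2 + h * hp + hp ^ 2) / 3) * (h - hp) = 0 := by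
      linear_combination rh1
    rcases mul_eq_zero.mp this with h0 | h0
    · linarith [sub_eq_zero.mp h0]
    · exact absurd h0 hhe'
  have e2 : s = Real.sqrt (2 / (9 * C)) *
      ((n * h) ^ ((3 : ℝ) / 2) - (np * hp) ^ ((3 : ℝ) / 2)) / (n - np) := by
    rw [eq_div_iff hne']
    exact rh2
  have hsq : Real.sqrt (2 / (81 * C)) = Real.sqrt (2 / (9 * C)) / 3 := by
    rw [show (2 / (81 * C) : ℝ) = (2 / (9 * C)) / 9 by ring,
      Real.sqrt_div (by positivity),
      show (9 : ℝ) = 3 ^ 2 by norm_num, Real.sqrt_sq (by norm_num)]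
  rw [hsq]
  calc s ^ 2 = s * s := sq s
    _ = ((h ^ 2 + h * hp + hp ^ 2) / 3) * (Real.sqrt (2 / (9 * C)) *
        ((n * h) ^ ((3 : ℝ) / 2) - (np * hp) ^ ((3 : ℝ) / 2)) / (n - np)) := by
      rw [← e1, ← e2]
    _ = Real.sqrt (2 / (9 * C)) / 3 * ((h ^ 2 + h * hp + hp ^ 2) *
        ((n * h) ^ ((3 : ℝ) / 2) - (np * hp) ^ ((3 : ℝ) / 2)) / (n - np)) := by
      ring
end
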